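/- arXiv:1506.07691 — 2 statements merged into one kernel-verified Lean document; each statement's English description precedes it below -/
import Mathlib

section
/- Let X be a strictly convex separable Banach space with compatible s.i.p., X_d a CB-space, K ∈ B(X), and {f_j} ⊆ X. If {f_j} is an X_d*-Bessel sequence for X* and there exists an X_d-Bessel sequence {g_j*} for X with K*f* = Σ_j [f_j, f] g_j* for all f* ∈ X*, then {f_j} is an X_d*-atomic system for X* with respect to K: Σ_j b_j f_j converges with ‖Σ_j b_j f_j‖ ≤ B‖b‖_{X_d} for all b ∈ X_d, and for every f ∈ X there exists a_f = {[f, g_j]} ∈ X_d with ‖a_f‖ ≤ C‖f‖ and Kf = Σ_j [f,g_j] f_j. -/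
open scoped ComplexConjugate
open Filter Topology

/-- A compatible semi-inner product on a complex normed space. -/
structure CompatSIP (X : Type*) [NormedAddCommGroup X] [NormedSpace ℂ X] where
  sip : X → X → ℂ
  add_left : ∀ f g h : X, sip (f + g) h = sip f h + sip g h
  smul_left : ∀ (a : ℂ) (f g : X), sip (a • f) g = a * sip f g
  smul_right : ∀ (a : ℂ) (f g : X), sip f (a • g) = conj a * sip f g
  compat : ∀ f : X, sip f f = (‖f‖ : ℂ) ^ 2
  cauchy_schwarz : ∀ f g : X, ‖sip f g‖ ≤ ‖f‖ * ‖g‖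

/-- The dual element `f*` of `f`, i.e. the bounded functional `g ↦ [g, f]`. -/
noncomputable def CompatSIP.dual {X : Type*} [NormedAddCommGroup X] [NormedSpace ℂ X]
    (S : CompatSIP X) (f : X) : StrongDual ℂ X :=
  LinearMap.mkContinuous
    { toFun := fun g => S.sip g f
      map_add' := fun g h => S.add_left g h f
      map_smul' := fun a g => S.smul_left a g f }
    ‖f‖ (fun g => by
      calc ‖S.sip g f‖ ≤ ‖g‖ * ‖f‖ := S.cauchy_schwarz g f
        _ = ‖f‖ * ‖g‖ := mul_comm _ _)

/-- The Banach-space adjoint `T* : Y* → X*` of a bounded operator `T : X → Y`. -/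
noncomputable def opDual {X Y : Type*} [NormedAddCommGroup X] [NormedSpace ℂ X]
    [NormedAddCommGroup Y] [NormedSpace ℂ Y] (T : X →L[ℂ] Y) :
    StrongDual ℂ Y →L[ℂ] StrongDual ℂ X :=
  LinearMap.mkContinuous
    { toFun := fun φ => φ.comp T
      map_add' := fun φ ψ => ContinuousLinearMap.add_comp φ ψ T
      map_smul' := fun a φ => ContinuousLinearMap.smul_comp a φ T }
    ‖T‖ (fun φ => by
      calc ‖φ.comp T‖ ≤ ‖φ‖ * ‖T‖ := ContinuousLinearMap.opNorm_comp_le φ T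
        _ = ‖T‖ * ‖φ‖ := mul_comm _ _)

@[simp] lemma opDual_apply {X Y : Type*} [NormedAddCommGroup X] [NormedSpace ℂ X]
    [NormedAddCommGroup Y] [NormedSpace ℂ Y] (T : X →L[ℂ] Y)
    (φ : StrongDual ℂ Y) (x : X) : opDual T φ x = φ (T x) := rfl

/-- Convergence of the series `∑ v j` (in the Schauder/ordered sense) to `s`. -/
def SumsTo {X : Type*} [NormedAddCommGroup X] (v : ℕ → X) (s : X) : Prop :=
  Tendsto (fun n => ∑ j ∈ Finset.range n, v j) atTop (𝓝 s)

/-!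
Testing `y = ∑_{j ∈ t} c_j f_j` against itself gives
`‖y‖² = [y, y] = F y (∑_{j ∈ t} c_j e_j) ≤ B ‖y‖ ‖∑_{j ∈ t} c_j e_j‖`, so the sections of
`∑ b_j f_j` are dominated by those of the convergent expansion `∑ b_j e_j`; completeness of `X`
gives the synthesis bound. For `b = {[x, g_j]}`, pairing the sum with `f*` yields
`∑ [x, g_j] [f_j, f]`, which is `K*f*` evaluated at `x`, i.e. `[Kx, f]`; since this holds for
every `f`, the sum is `Kx`.
-/

namespace CompatSIP

variable {X : Type*} [NormedAddCommGroup X] [NormedSpace ℂ X] (S : CompatSIP X)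

lemma dual_apply (f g : X) : S.dual f g = S.sip g f := rfl

lemma sip_sum_smul_left {ι : Type*} (t : Finset ι) (c : ι → ℂ) (v : ι → X) (y : X) :
    S.sip (∑ j ∈ t, c j • v j) y = ∑ j ∈ t, c j * S.sip (v j) y := by
  simp only [← dual_apply, map_sum, map_smul, smul_eq_mul]

lemma norm_sip_self (x : X) : ‖S.sip x x‖ = ‖x‖ ^ 2 := by
  rw [S.compat, norm_pow, Complex.norm_real, norm_norm]

lemma eq_of_sip_left_eq {x y : X} (h : ∀ f, S.sip x f = S.sip y f) : x = y := by
  have hsip : S.sip (x - y) (x - y) = 0 := by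
    rw [← dual_apply, map_sub, dual_apply, dual_apply, h, sub_self]
  have hnorm : ‖x - y‖ ^ 2 = 0 := by rw [← S.norm_sip_self, hsip, norm_zero]
  exact sub_eq_zero.mp (norm_eq_zero.mp (pow_eq_zero_iff two_ne_zero |>.mp hnorm))

lemma norm_sum_smul_le_of_bessel {Xd ι : Type*} [NormedAddCommGroup Xd] [NormedSpace ℂ Xd]
    {e : ι → Xd} {fj : ι → X} {F : X → StrongDual ℂ Xd} {B : ℝ}
    (hF : ∀ f j, F f (e j) = S.sip (fj j) f) (hB : 0 ≤ B)
    (hBessel : ∀ f, ‖F f‖ ≤ B * ‖f‖) (t : Finset ι) (c : ι → ℂ) :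
    ‖∑ j ∈ t, c j • fj j‖ ≤ B * ‖∑ j ∈ t, c j • e j‖ := by
  set y := ∑ j ∈ t, c j • fj j
  have hy : S.sip y y = F y (∑ j ∈ t, c j • e j) := by
    simp only [y, sip_sum_smul_left, map_sum, map_smul, hF, smul_eq_mul]
  have hsq : ‖y‖ * ‖y‖ ≤ (B * ‖∑ j ∈ t, c j • e j‖) * ‖y‖ :=
    calc ‖y‖ * ‖y‖ = ‖F y (∑ j ∈ t, c j • e j)‖ := by rw [← hy, norm_sip_self, sq]
      _ ≤ ‖F y‖ * ‖∑ j ∈ t, c j • e j‖ := (F y).le_opNorm _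
      _ ≤ (B * ‖y‖) * ‖∑ j ∈ t, c j • e j‖ := by gcongr; exact hBessel y
      _ = (B * ‖∑ j ∈ t, c j • e j‖) * ‖y‖ := by ring
  rcases (norm_nonneg y).eq_or_lt with hy0 | hypos
  · rw [← hy0]; positivity
  · exact le_of_mul_le_mul_right hsq hypos

end CompatSIP

lemma cauchySeq_of_dist_le_mul {α β : Type*} [PseudoMetricSpace α] [PseudoMetricSpace β]
    {u : ℕ → α} {p : ℕ → β} {B : ℝ} (hp : CauchySeq p)
    (h : ∀ m n, dist (u m) (u n) ≤ B * dist (p m) (p n)) : CauchySeq u := by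
  rw [cauchySeq_iff_tendsto_dist_atTop_0] at hp ⊢
  exact squeeze_zero (fun _ => dist_nonneg) (fun mn => h mn.1 mn.2)
    (by simpa using hp.const_mul B)

section SumsTo

variable {E : Type*} [NormedAddCommGroup E]

lemma SumsTo.unique {v : ℕ → E} {s s' : E} (h : SumsTo v s) (h' : SumsTo v s') : s = s' :=
  tendsto_nhds_unique h h'

lemma SumsTo.map {F : Type*} [NormedAddCommGroup F] [NormedSpace ℂ E] [NormedSpace ℂ F]
    {v : ℕ → E} {s : E} (h : SumsTo v s) (L : E →L[ℂ] F) : SumsTo (fun j => L (v j)) (L s) := by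
  simpa only [SumsTo, Function.comp_def, map_sum] using (L.continuous.tendsto s).comp h

lemma dist_partialSum_eq_norm_sum_Ico {G : Type*} [SeminormedAddCommGroup G] (w : ℕ → G)
    (m n : ℕ) : dist (∑ j ∈ Finset.range m, w j) (∑ j ∈ Finset.range n, w j)
      = ‖∑ j ∈ Finset.Ico (min m n) (max m n), w j‖ := by
  rcases le_total m n with hmn | hnm
  · rw [dist_comm, dist_eq_norm, min_eq_left hmn, max_eq_right hmn, Finset.sum_Ico_eq_sub _ hmn]
  · rw [dist_eq_norm, min_eq_right hnm, max_eq_left hnm, Finset.sum_Ico_eq_sub _ hnm]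

lemma exists_sumsTo_of_norm_sum_le [CompleteSpace E] {F : Type*} [NormedAddCommGroup F]
    {u : ℕ → E} {v : ℕ → F} {b : F} {B : ℝ} (hv : SumsTo v b)
    (h : ∀ t : Finset ℕ, ‖∑ j ∈ t, u j‖ ≤ B * ‖∑ j ∈ t, v j‖) :
    ∃ s, SumsTo u s ∧ ‖s‖ ≤ B * ‖b‖ := by
  have hcauchy : CauchySeq fun n => ∑ j ∈ Finset.range n, u j :=
    cauchySeq_of_dist_le_mul (B := B) hv.cauchySeq fun m n => by
      simp only [dist_partialSum_eq_norm_sum_Ico]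
      exact h _
  obtain ⟨s, hs⟩ := cauchySeq_tendsto_of_complete hcauchy
  exact ⟨s, hs, le_of_tendsto_of_tendsto' hs.norm (hv.norm.const_mul B) fun n => h _⟩

end SumsTo

lemma CompatSIP.eq_of_sumsTo_of_decomposition {X : Type*} [NormedAddCommGroup X]
    [NormedSpace ℂ X] (S : CompatSIP X) {K : X →L[ℂ] X} {fj g : ℕ → X}
    (hdec : ∀ f, SumsTo (fun j => S.sip (fj j) f • S.dual (g j)) (opDual K (S.dual f)))
    {x s : X} {a : ℕ → ℂ} (ha : ∀ j, a j = S.sip x (g j)) (hs : SumsTo (fun j => a j • fj j) s) :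
    s = K x := by
  refine S.eq_of_sip_left_eq fun f => ?_
  have hpair := hs.map (S.dual f)
  have heval := (hdec f).map (ContinuousLinearMap.apply ℂ ℂ x)
  simp only [S.dual_apply, S.smul_left, ContinuousLinearMap.apply_apply,
    _root_.smul_apply, opDual_apply, smul_eq_mul, ha] at hpair heval
  simp only [mul_comm (S.sip x _)] at hpair
  exact hpair.unique heval

theorem Bessel_decomposition_implies_atomic_system_general {X Xd : Type*}
    [NormedAddCommGroup X] [NormedSpace ℂ X] [CompleteSpace X]
    [NormedAddCommGroup Xd] [NormedSpace ℂ Xd]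
    (S : CompatSIP X)
    (e : ℕ → Xd) (coord : ℕ → StrongDual ℂ Xd)
    (hbasis : ∀ c : Xd, SumsTo (fun j => coord j c • e j) c)
    (fj : ℕ → X) (K : X →L[ℂ] X)
    -- `{f_j}` is an `X_d^*`-Bessel sequence with bound `B`
    (F : X → StrongDual ℂ Xd)
    (hF : ∀ (f : X) (j : ℕ), F f (e j) = S.sip (fj j) f)
    (B : ℝ) (hB : 0 < B) (hBessel : ∀ f : X, ‖F f‖ ≤ B * ‖f‖)
    -- `{g_j^*}` is an `X_d`-Bessel sequence with bound `C`
    (g : ℕ → X) (m : X → Xd) (C : ℝ) (hC : 0 < C)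
    (hm : ∀ (x : X) (j : ℕ), coord j (m x) = S.sip x (g j))
    (hmC : ∀ x : X, ‖m x‖ ≤ C * ‖x‖)
    -- decomposition `K^*f^* = Σ_j [f_j, f] g_j^*`
    (hdec : ∀ f : X,
      SumsTo (fun j => S.sip (fj j) f • S.dual (g j)) (opDual K (S.dual f))) :
    (∃ B' : ℝ, 0 < B' ∧ ∀ b : Xd, ∃ s : X,
        SumsTo (fun j => coord j b • fj j) s ∧ ‖s‖ ≤ B' * ‖b‖) ∧
    (∃ C' : ℝ, 0 < C' ∧ ∀ x : X, ∃ a : Xd,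
        (∀ j, coord j a = S.sip x (g j)) ∧ ‖a‖ ≤ C' * ‖x‖ ∧
        SumsTo (fun j => coord j a • fj j) (K x)) := by
  have synthesis (b : Xd) : ∃ s : X, SumsTo (fun j => coord j b • fj j) s ∧ ‖s‖ ≤ B * ‖b‖ :=
    exists_sumsTo_of_norm_sum_le (hbasis b)
      (S.norm_sum_smul_le_of_bessel hF hB.le hBessel · _)
  refine ⟨⟨B, hB, synthesis⟩, C, hC, fun x => ⟨m x, hm x, hmC x, ?_⟩⟩
  obtain ⟨s, hs, -⟩ := synthesis (m x)
  rwa [← S.eq_of_sumsTo_of_decomposition hdec (hm x) hs]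

/-- If `{f_j}` is an `X_d^*`-Bessel sequence and there is an `X_d`-Bessel sequence
`{g_j^*}` with `K^*f^* = Σ_j [f_j, f] g_j^*`, then `{f_j}` is an `X_d^*`-atomic
system for `X^*` with respect to `K`. -/
theorem Bessel_decomposition_implies_atomic_system {X Xd : Type*}
    [NormedAddCommGroup X] [NormedSpace ℂ X] [CompleteSpace X]
    [StrictConvexSpace ℝ X] [TopologicalSpace.SeparableSpace X]
    [NormedAddCommGroup Xd] [NormedSpace ℂ Xd] [CompleteSpace Xd]
    (S : CompatSIP X)
    (e : ℕ → Xd) (coord : ℕ → StrongDual ℂ Xd)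
    (hco : ∀ i j, coord i (e j) = if i = j then (1 : ℂ) else 0)
    (hbasis : ∀ c : Xd, SumsTo (fun j => coord j c • e j) c)
    (fj : ℕ → X) (K : X →L[ℂ] X)
    -- `{f_j}` is an `X_d^*`-Bessel sequence with bound `B`
    (F : X → StrongDual ℂ Xd)
    (hF : ∀ (f : X) (j : ℕ), F f (e j) = S.sip (fj j) f)
    (B : ℝ) (hB : 0 < B) (hBessel : ∀ f : X, ‖F f‖ ≤ B * ‖f‖)
    -- `{g_j^*}` is an `X_d`-Bessel sequence with bound `C`
    (g : ℕ → X) (m : X → Xd) (C : ℝ) (hC : 0 < C)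
    (hm : ∀ (x : X) (j : ℕ), coord j (m x) = S.sip x (g j))
    (hmC : ∀ x : X, ‖m x‖ ≤ C * ‖x‖)
    -- decomposition `K^*f^* = Σ_j [f_j, f] g_j^*`
    (hdec : ∀ f : X,
      SumsTo (fun j => S.sip (fj j) f • S.dual (g j)) (opDual K (S.dual f))) :
    (∃ B' : ℝ, 0 < B' ∧ ∀ b : Xd, ∃ s : X,
        SumsTo (fun j => coord j b • fj j) s ∧ ‖s‖ ≤ B' * ‖b‖) ∧
    (∃ C' : ℝ, 0 < C' ∧ ∀ x : X, ∃ a : Xd,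
        (∀ j, coord j a = S.sip x (g j)) ∧ ‖a‖ ≤ C' * ‖x‖ ∧
        SumsTo (fun j => coord j a • fj j) (K x)) :=
  Bessel_decomposition_implies_atomic_system_general S e coord hbasis fj K F hF B hB hBessel g m C
    hC hm hmC hdec
end

section
/- Every X_d*-atomic system {f_j} for X* with respect to K ∈ B(X) is an X_d*-K-frame for X*: if C is the constant in the atomic decomposition, then (1/C)‖K*f*‖ ≤ ‖{[f_j, f]}‖_{X_d*} ≤ B‖f*‖ for all f ∈ X. -/
/-!
Since the series `∑ bⱼ fⱼ` converge with `‖∑ bⱼ fⱼ‖ ≤ B‖b‖`, they define a bounded synthesis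
operator `T : X_d → X` with `T eⱼ = fⱼ` and `‖T‖ ≤ B`. The frame sequence `{[fⱼ, f]}` is then the
functional `f* ∘ T ∈ X_d*`, whose norm is at most `‖f*‖ B`. The atomic decomposition says
`Kx = T a` with `‖a‖ ≤ C‖x‖`, so `|(K* f*) x| = |(f* ∘ T) a| ≤ C ‖f* ∘ T‖ ‖x‖`.
-/

open scoped ComplexConjugate
open Filter Topology

namespace SumsTo

variable {E : Type*} [NormedAddCommGroup E] {v w : ℕ → E} {s t : E}

theorem unique_s10 (hs : SumsTo v s) (ht : SumsTo v t) : s = t :=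
  tendsto_nhds_unique hs ht

theorem add (hv : SumsTo v s) (hw : SumsTo w t) : SumsTo (fun j => v j + w j) (s + t) := by
  simpa only [SumsTo, Finset.sum_add_distrib] using Tendsto.add hv hw

theorem const_smul {𝕜 : Type*} [NormedField 𝕜] [NormedSpace 𝕜 E] (c : 𝕜) (hv : SumsTo v s) :
    SumsTo (fun j => c • v j) (c • s) := by
  simpa only [SumsTo, ← Finset.smul_sum] using Tendsto.const_smul hv c

theorem ite_eq (v : ℕ → E) (j : ℕ) : SumsTo (fun i => if i = j then v i else 0) (v j) := by
  refine tendsto_const_nhds.congr' ?_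
  filter_upwards [eventually_gt_atTop j] with n hn
  rw [Finset.sum_ite_eq', if_pos (Finset.mem_range.2 hn)]

end SumsTo

section Synthesis

variable {𝕜 X Xd : Type*} [NontriviallyNormedField 𝕜]
  [NormedAddCommGroup X] [NormedSpace 𝕜 X] [NormedAddCommGroup Xd] [NormedSpace 𝕜 Xd]
  (coord : ℕ → StrongDual 𝕜 Xd) (fj : ℕ → X) {B : ℝ}
  (hconv : ∀ b : Xd, ∃ s : X, SumsTo (fun j => coord j b • fj j) s ∧ ‖s‖ ≤ B * ‖b‖)

noncomputable def synthesis : Xd →L[𝕜] X :=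
  LinearMap.mkContinuous
    { toFun := fun b => (hconv b).choose
      map_add' := fun b c => (hconv (b + c)).choose_spec.1.unique_s10 <| by
        simpa only [map_add, add_smul] using
          (hconv b).choose_spec.1.add (hconv c).choose_spec.1
      map_smul' := fun a b => (hconv (a • b)).choose_spec.1.unique_s10 <| by
        simpa only [map_smul, smul_eq_mul, mul_smul, RingHom.id_apply] using
          (hconv b).choose_spec.1.const_smul a }
    B (fun b => (hconv b).choose_spec.2)

variable {coord fj hconv}

theorem synthesis_eq_of_sumsTo {b : Xd} {x : X} (h : SumsTo (fun j => coord j b • fj j) x) :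
    synthesis coord fj hconv b = x :=
  (hconv b).choose_spec.1.unique_s10 h

theorem norm_synthesis_le (hB : 0 ≤ B) : ‖synthesis coord fj hconv‖ ≤ B :=
  LinearMap.mkContinuous_norm_le _ hB _

theorem synthesis_apply_basis {e : ℕ → Xd}
    (hco : ∀ i j, coord i (e j) = if i = j then (1 : 𝕜) else 0) (j : ℕ) :
    synthesis coord fj hconv (e j) = fj j :=
  synthesis_eq_of_sumsTo <| by
    simpa only [hco, ite_smul, one_smul, zero_smul] using SumsTo.ite_eq fj j

end Synthesis

theorem ContinuousLinearMap.norm_comp_le_mul_norm_comp_of_lift {𝕜 E F G H : Type*}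
    [NontriviallyNormedField 𝕜] [NormedAddCommGroup E] [NormedSpace 𝕜 E]
    [NormedAddCommGroup F] [NormedSpace 𝕜 F] [NormedAddCommGroup G] [NormedSpace 𝕜 G]
    [NormedAddCommGroup H] [NormedSpace 𝕜 H]
    (T : E →L[𝕜] F) (K : G →L[𝕜] F) {C : ℝ} (hC : 0 ≤ C)
    (hlift : ∀ x, ∃ a, ‖a‖ ≤ C * ‖x‖ ∧ T a = K x) (φ : F →L[𝕜] H) :
    ‖φ.comp K‖ ≤ C * ‖φ.comp T‖ := by
  refine (φ.comp K).opNorm_le_bound (by positivity) fun x => ?_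
  obtain ⟨a, ha, hTa⟩ := hlift x
  calc ‖φ.comp K x‖ = ‖φ.comp T a‖ := by simp [hTa]
    _ ≤ ‖φ.comp T‖ * ‖a‖ := (φ.comp T).le_opNorm a
    _ ≤ ‖φ.comp T‖ * (C * ‖x‖) := by gcongr
    _ = C * ‖φ.comp T‖ * ‖x‖ := by ring

theorem CompatSIP.dual_apply_s10 {X : Type*} [NormedAddCommGroup X] [NormedSpace ℂ X]
    (S : CompatSIP X) (f g : X) : S.dual f g = S.sip g f :=
  rfl

theorem CompatSIP.norm_dual_le {X : Type*} [NormedAddCommGroup X] [NormedSpace ℂ X]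
    (S : CompatSIP X) (f : X) : ‖S.dual f‖ ≤ ‖f‖ :=
  LinearMap.mkContinuous_norm_le _ (norm_nonneg f) _

theorem atomic_system_is_Kframe_general {X Xd : Type*}
    [NormedAddCommGroup X] [NormedSpace ℂ X]
    [NormedAddCommGroup Xd] [NormedSpace ℂ Xd]
    (S : CompatSIP X)
    (e : ℕ → Xd) (coord : ℕ → StrongDual ℂ Xd)
    (hco : ∀ i j, coord i (e j) = if i = j then (1 : ℂ) else 0)
    (fj : ℕ → X) (K : X →L[ℂ] X)
    (B : ℝ) (hB : 0 < B)
    (hconv : ∀ b : Xd, ∃ s : X,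
      SumsTo (fun j => coord j b • fj j) s ∧ ‖s‖ ≤ B * ‖b‖)
    (C : ℝ) (hC : 0 < C)
    (hatomic : ∀ x : X, ∃ a : Xd, ‖a‖ ≤ C * ‖x‖ ∧
      SumsTo (fun j => coord j a • fj j) (K x)) :
    ∀ f : X, ∃ F : StrongDual ℂ Xd,
      (∀ j, F (e j) = S.sip (fj j) f) ∧
      (1 / C) * ‖opDual K (S.dual f)‖ ≤ ‖F‖ ∧ ‖F‖ ≤ B * ‖f‖ := by
  intro f
  set T := synthesis coord fj hconv
  refine ⟨(S.dual f).comp T, fun j => ?_, ?_, ?_⟩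
  · simp only [ContinuousLinearMap.comp_apply, T, synthesis_apply_basis hco, S.dual_apply_s10]
  · rw [one_div, inv_mul_le_iff₀ hC]
    change ‖(S.dual f).comp K‖ ≤ C * ‖(S.dual f).comp T‖
    refine T.norm_comp_le_mul_norm_comp_of_lift K hC.le (fun x => ?_) (S.dual f)
    obtain ⟨a, ha, hKa⟩ := hatomic x
    exact ⟨a, ha, synthesis_eq_of_sumsTo hKa⟩
  · calc ‖(S.dual f).comp T‖ ≤ ‖S.dual f‖ * ‖T‖ := (S.dual f).opNorm_comp_le T
      _ ≤ ‖f‖ * B := by gcongr; exacts [S.norm_dual_le f, norm_synthesis_le hB.le]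
      _ = B * ‖f‖ := mul_comm _ _

/-- Every `X_d^*`-atomic system for `X^*` with respect to `K` is an `X_d^*`-`K`-frame
with lower bound `1/C`. -/
theorem atomic_system_is_Kframe {X Xd : Type*}
    [NormedAddCommGroup X] [NormedSpace ℂ X] [CompleteSpace X]
    [StrictConvexSpace ℝ X] [TopologicalSpace.SeparableSpace X]
    [NormedAddCommGroup Xd] [NormedSpace ℂ Xd] [CompleteSpace Xd]
    (S : CompatSIP X)
    (e : ℕ → Xd) (coord : ℕ → StrongDual ℂ Xd)
    (hco : ∀ i j, coord i (e j) = if i = j then (1 : ℂ) else 0)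
    (hbasis : ∀ c : Xd, SumsTo (fun j => coord j c • e j) c)
    (fj : ℕ → X) (K : X →L[ℂ] X)
    (B : ℝ) (hB : 0 < B)
    (hconv : ∀ b : Xd, ∃ s : X,
      SumsTo (fun j => coord j b • fj j) s ∧ ‖s‖ ≤ B * ‖b‖)
    (C : ℝ) (hC : 0 < C)
    (hatomic : ∀ x : X, ∃ a : Xd, ‖a‖ ≤ C * ‖x‖ ∧
      SumsTo (fun j => coord j a • fj j) (K x)) :
    ∀ f : X, ∃ F : StrongDual ℂ Xd,
      (∀ j, F (e j) = S.sip (fj j) f) ∧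
      (1 / C) * ‖opDual K (S.dual f)‖ ≤ ‖F‖ ∧ ‖F‖ ≤ B * ‖f‖ :=
  atomic_system_is_Kframe_general S e coord hco fj K B hB hconv C hC hatomic
end
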